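/- arXiv:2109.13010 — 2 statements merged into one kernel-verified Lean document; each statement's English description precedes it below -/
import Mathlib

section
/- A k-form α on a 2n-dimensional symplectic vector space (with k ≤ n) is primitive (i.e. Λα = 0) if and only if L^{n-k+1} α = 0, where L is wedging with the symplectic form and Λ is its adjoint. -/
/-!
Model of the exterior algebra of `V* = (ℝ^{2n})*`: a form is a family of
coefficients indexed by finite subsets `S ⊆ {0, …, 2n-1}` of coordinate
indices, representing `∑_S α_S dx_S`.  `wdg i` is wedging with `dxᵢ`,
`ctr i` is contraction with `∂ᵢ`.  The symplectic form is
`ω = ∑_{i<n} dx_{2i} ∧ dx_{2i+1}` (0-indexed version of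
`∑ dx_{2i-1} ∧ dx_{2i}`) and the dual bivector is
`π = ∑_{i<n} ∂_{2i} ∧ ∂_{2i+1}`.
-/

noncomputable section

abbrev Form := Finset ℕ → ℝ

/-- The sign `(-1)^{#{j ∈ S : j < i}}`. -/
def sgn (i : ℕ) (S : Finset ℕ) : ℝ := (-1 : ℝ) ^ (S.filter (· < i)).card

/-- Wedging with `dxᵢ`. -/
def wdg (i : ℕ) (α : Form) : Form :=
  fun S => if i ∈ S then sgn i S * α (S.erase i) else 0

/-- Contraction with the coordinate vector field `∂ᵢ`. -/
def ctr (i : ℕ) (α : Form) : Form :=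
  fun S => if i ∈ S then 0 else sgn i S * α (insert i S)

/-- The Lefschetz operator `L = ω ∧ ·` with `ω = ∑_{i<n} dx_{2i} ∧ dx_{2i+1}`. -/
def Lop (n : ℕ) (α : Form) : Form :=
  ∑ i ∈ Finset.range n, wdg (2 * i) (wdg (2 * i + 1) α)

/-- The dual Lefschetz operator `Λ = ι_π` with `π = ∑_{i<n} ∂_{2i} ∧ ∂_{2i+1}`. -/
def Λop (n : ℕ) (α : Form) : Form :=
  ∑ i ∈ Finset.range n, ctr (2 * i + 1) (ctr (2 * i) α)

/-- The index-counting operator `H`, acting on `k`-forms as `(n - k)`. -/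
def Hop (n : ℕ) (α : Form) : Form :=
  fun S => ((n : ℝ) - (S.card : ℝ)) * α S

/-- `α` only involves the coordinates `x_0, …, x_{2n-1}` of `ℝ^{2n}`. -/
def IsSupported (n : ℕ) (α : Form) : Prop :=
  ∀ S : Finset ℕ, ¬ S ⊆ Finset.range (2 * n) → α S = 0


-- auxiliary development
def padd (i : ℕ) (S : Finset ℕ) : Finset ℕ := insert (2*i) (insert (2*i+1) S)
def prem (i : ℕ) (S : Finset ℕ) : Finset ℕ := (S.erase (2*i)).erase (2*i+1)

def LF (n : ℕ) (α : Form) : Form :=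
  fun S => ∑ i ∈ Finset.range n, if 2*i ∈ S ∧ 2*i+1 ∈ S then α (prem i S) else 0

def ΛF (n : ℕ) (α : Form) : Form :=
  fun S => ∑ i ∈ Finset.range n, if 2*i ∉ S ∧ 2*i+1 ∉ S then α (padd i S) else 0

lemma sgn_sq (i : ℕ) (S : Finset ℕ) : sgn i S * sgn i S = 1 := by
  rw [sgn, ← pow_add]
  exact Even.neg_one_pow ⟨_, rfl⟩

lemma Lop_eq (n : ℕ) : Lop n = LF n := by
  funext α S
  rw [Lop, LF, Finset.sum_apply]
  refine Finset.sum_congr rfl fun i _ => ?_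
  by_cases h1 : 2*i ∈ S
  · by_cases h2 : 2*i+1 ∈ S
    · have h2' : 2*i+1 ∈ S.erase (2*i) := Finset.mem_erase.2 ⟨by omega, h2⟩
      have hf : (S.erase (2*i)).filter (· < 2*i+1) = S.filter (· < 2*i) := by
        ext j
        simp only [Finset.mem_filter, Finset.mem_erase]
        constructor
        · rintro ⟨⟨hne, hj⟩, hlt⟩; exact ⟨hj, by omega⟩
        · rintro ⟨hj, hlt⟩; exact ⟨⟨by omega, hj⟩, by omega⟩
      simp only [wdg, h1, h2', if_pos, if_true, h2, true_and, prem]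
      have : sgn (2*i+1) (S.erase (2*i)) = sgn (2*i) S := by rw [sgn, sgn, hf]
      rw [this, ← mul_assoc, sgn_sq, one_mul]
    · have h2' : 2*i+1 ∉ S.erase (2*i) := fun h => h2 (Finset.mem_of_mem_erase h)
      simp [wdg, h1, h2', h2]
  · simp [wdg, h1]

lemma Λop_eq (n : ℕ) : Λop n = ΛF n := by
  funext α S
  rw [Λop, ΛF, Finset.sum_apply]
  refine Finset.sum_congr rfl fun i _ => ?_
  by_cases h2 : 2*i+1 ∈ S
  · simp [ctr, h2]
  · by_cases h1 : 2*i ∈ S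
    · have h1' : 2*i ∈ insert (2*i+1) S := Finset.mem_insert_of_mem h1
      simp [ctr, h1, h2, h1']
    · have h1' : 2*i ∉ insert (2*i+1) S := by
        simp only [Finset.mem_insert]; push_neg; exact ⟨by omega, h1⟩
      have hfa : S.filter (· < 2*i+1) = S.filter (· < 2*i) := by
        ext j
        simp only [Finset.mem_filter]
        constructor
        · rintro ⟨hj, hlt⟩
          refine ⟨hj, ?_⟩
          by_cases hje : j = 2*i
          · subst hje; exact absurd hj h1
          · omega
        · rintro ⟨hj, hlt⟩; exact ⟨hj, by omega⟩
      have hfb : (insert (2*i+1) S).filter (· < 2*i) = S.filter (· < 2*i) := by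
        ext j
        simp only [Finset.mem_filter, Finset.mem_insert]
        constructor
        · rintro ⟨hj | hj, hlt⟩
          · omega
          · exact ⟨hj, hlt⟩
        · rintro ⟨hj, hlt⟩; exact ⟨Or.inr hj, hlt⟩
      simp only [ctr, h2, if_false, if_neg h1', h1, padd]
      rw [show sgn (2*i+1) S = sgn (2*i) S by rw [sgn, sgn, hfa],
        show sgn (2*i) (insert (2*i+1) S) = sgn (2*i) S by rw [sgn, sgn, hfb],
        ← mul_assoc, sgn_sq, one_mul]
      simp

def HasDeg (k : ℕ) (α : Form) : Prop := ∀ S : Finset ℕ, S.card ≠ k → α S = 0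

lemma LF_supp {n : ℕ} {α : Form} (h : IsSupported n α) : IsSupported n (LF n α) := by
  intro S hS
  rw [LF]
  refine Finset.sum_eq_zero fun i hi => ?_
  split_ifs with hc
  · refine h _ fun hsub => hS fun j hj => ?_
    have hi' : i < n := Finset.mem_range.1 hi
    by_cases hj1 : j = 2*i
    · simp [hj1, Finset.mem_range]; omega
    by_cases hj2 : j = 2*i+1
    · simp [hj2, Finset.mem_range]; omega
    · exact hsub (Finset.mem_erase.2 ⟨hj2, Finset.mem_erase.2 ⟨hj1, hj⟩⟩)
  · rfl

lemma ΛF_supp {n : ℕ} {α : Form} (h : IsSupported n α) : IsSupported n (ΛF n α) := by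
  intro S hS
  rw [ΛF]
  refine Finset.sum_eq_zero fun i hi => ?_
  split_ifs with hc
  · refine h _ fun hsub => hS fun j hj => ?_
    exact hsub (by simp [padd, hj])
  · rfl

lemma card_prem {i : ℕ} {S : Finset ℕ} (h1 : 2*i ∈ S) (h2 : 2*i+1 ∈ S) :
    (prem i S).card + 2 = S.card := by
  have h2' : 2*i+1 ∈ S.erase (2*i) := Finset.mem_erase.2 ⟨by omega, h2⟩
  rw [prem, Finset.card_erase_of_mem h2', Finset.card_erase_of_mem h1]
  have : 1 ≤ S.card := Finset.card_pos.2 ⟨_, h1⟩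
  have : 2 ≤ S.card := Finset.one_lt_card.2 ⟨_, h1, _, h2, by omega⟩
  omega

lemma card_padd {i : ℕ} {S : Finset ℕ} (h1 : 2*i ∉ S) (h2 : 2*i+1 ∉ S) :
    (padd i S).card = S.card + 2 := by
  have h1' : 2*i ∉ insert (2*i+1) S := by
    simp only [Finset.mem_insert]; push_neg; exact ⟨by omega, h1⟩
  rw [padd, Finset.card_insert_of_notMem h1', Finset.card_insert_of_notMem h2]

lemma LF_deg {n k : ℕ} {α : Form} (h : HasDeg k α) : HasDeg (k + 2) (LF n α) := by
  intro S hS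
  rw [LF]
  refine Finset.sum_eq_zero fun i _ => ?_
  split_ifs with hc
  · refine h _ fun hcard => hS ?_
    have := card_prem hc.1 hc.2
    omega
  · rfl

lemma ΛF_deg' {n k : ℕ} {α : Form} (h : HasDeg k α) :
    ∀ S : Finset ℕ, S.card + 2 ≠ k → ΛF n α S = 0 := by
  intro S hS
  rw [ΛF]
  refine Finset.sum_eq_zero fun i _ => ?_
  split_ifs with hc
  · exact h _ (by rw [card_padd hc.1 hc.2]; exact hS)
  · rfl

lemma LF_iter_deg {n k : ℕ} {α : Form} (h : HasDeg k α) (m : ℕ) :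
    HasDeg (k + 2*m) ((LF n)^[m] α) := by
  induction m with
  | zero => simpa using h
  | succ m ih =>
      rw [Function.iterate_succ_apply']
      have h2 := LF_deg (n := n) ih
      intro S hS
      exact h2 S (by omega)

lemma LF_iter_supp {n : ℕ} {α : Form} (h : IsSupported n α) (m : ℕ) :
    IsSupported n ((LF n)^[m] α) := by
  induction m with
  | zero => simpa using h
  | succ m ih => rw [Function.iterate_succ_apply']; exact LF_supp ih

lemma LF_zero (n : ℕ) : LF n (fun _ => (0:ℝ)) = fun _ => (0:ℝ) := by
  funext S; rw [LF]; exact Finset.sum_eq_zero fun i _ => by split <;> rfl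

lemma ΛF_zero (n : ℕ) : ΛF n (fun _ => (0:ℝ)) = fun _ => (0:ℝ) := by
  funext S; rw [ΛF]; exact Finset.sum_eq_zero fun i _ => by split <;> rfl

lemma LF_lin (n : ℕ) (f g : Form) (c : ℝ) :
    LF n (fun T => f T + c * g T) = fun S => LF n f S + c * LF n g S := by
  funext S
  rw [LF, LF, LF, Finset.mul_sum, ← Finset.sum_add_distrib]
  refine Finset.sum_congr rfl fun i _ => ?_
  split <;> ring

lemma count_aux (n : ℕ) (S : Finset ℕ) :
    ∑ j ∈ Finset.range n, ((if 2*j ∈ S then (1:ℝ) else 0) + (if 2*j+1 ∈ S then (1:ℝ) else 0))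
      = ((S ∩ Finset.range (2*n)).card : ℝ) := by
  induction n with
  | zero => simp
  | succ n ih =>
      rw [Finset.sum_range_succ, ih]
      have hsplit : S ∩ Finset.range (2*(n+1)) =
          (S ∩ Finset.range (2*n)) ∪ (S ∩ {2*n, 2*n+1}) := by
        ext x
        simp only [Finset.mem_inter, Finset.mem_union, Finset.mem_range, Finset.mem_insert,
          Finset.mem_singleton]
        constructor
        · rintro ⟨hx, hr⟩
          by_cases h : x < 2*n
          · exact Or.inl ⟨hx, h⟩
          · exact Or.inr ⟨hx, by omega⟩
        · rintro (⟨hx, hr⟩ | ⟨hx, hr⟩) <;> exact ⟨hx, by omega⟩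
      have hdisj : Disjoint (S ∩ Finset.range (2*n)) (S ∩ {2*n, 2*n+1}) := by
        refine Finset.disjoint_left.2 fun x hx hx' => ?_
        simp only [Finset.mem_inter, Finset.mem_range, Finset.mem_insert,
          Finset.mem_singleton] at hx hx'
        omega
      rw [hsplit, Finset.card_union_of_disjoint hdisj]
      have hc : ((S ∩ {2*n, 2*n+1}).card : ℝ)
          = (if 2*n ∈ S then (1:ℝ) else 0) + (if 2*n+1 ∈ S then (1:ℝ) else 0) := by
        by_cases h1 : 2*n ∈ S <;> by_cases h2 : 2*n+1 ∈ S
        · rw [if_pos h1, if_pos h2]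
          have : S ∩ {2*n, 2*n+1} = {2*n, 2*n+1} := by
            refine Finset.inter_eq_right.2 ?_
            intro x hx
            simp only [Finset.mem_insert, Finset.mem_singleton] at hx
            rcases hx with h | h <;> subst h <;> assumption
          rw [this]; norm_num
        · rw [if_pos h1, if_neg h2]
          have : S ∩ {2*n, 2*n+1} = {2*n} := by
            ext x
            simp only [Finset.mem_inter, Finset.mem_insert, Finset.mem_singleton]
            constructor
            · rintro ⟨hx, h | h⟩
              · exact h
              · subst h; exact absurd hx h2
            · rintro h; subst h; exact ⟨h1, Or.inl rfl⟩
          rw [this]; norm_num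
        · rw [if_neg h1, if_pos h2]
          have : S ∩ {2*n, 2*n+1} = {2*n+1} := by
            ext x
            simp only [Finset.mem_inter, Finset.mem_insert, Finset.mem_singleton]
            constructor
            · rintro ⟨hx, h | h⟩
              · subst h; exact absurd hx h1
              · exact h
            · rintro h; subst h; exact ⟨h2, Or.inr rfl⟩
          rw [this]; norm_num
        · rw [if_neg h1, if_neg h2]
          have : S ∩ {2*n, 2*n+1} = ∅ := by
            ext x
            simp only [Finset.mem_inter, Finset.mem_insert, Finset.mem_singleton,
              Finset.notMem_empty, iff_false, not_and]
            rintro hx (h | h) <;> subst h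
            · exact h1 hx
            · exact h2 hx
          rw [this]; norm_num
      push_cast
      rw [hc]

lemma count_lemma {n : ℕ} {S : Finset ℕ} (hS : S ⊆ Finset.range (2*n)) :
    ∑ j ∈ Finset.range n,
      ((if 2*j ∉ S ∧ 2*j+1 ∉ S then (1:ℝ) else 0) - (if 2*j ∈ S ∧ 2*j+1 ∈ S then (1:ℝ) else 0))
      = (n : ℝ) - S.card := by
  have key : ∀ j : ℕ,
      ((if 2*j ∉ S ∧ 2*j+1 ∉ S then (1:ℝ) else 0) - (if 2*j ∈ S ∧ 2*j+1 ∈ S then (1:ℝ) else 0))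
      = 1 - ((if 2*j ∈ S then (1:ℝ) else 0) + (if 2*j+1 ∈ S then (1:ℝ) else 0)) := by
    intro j
    by_cases h1 : 2*j ∈ S <;> by_cases h2 : 2*j+1 ∈ S <;>
      simp [h1, h2]
  calc ∑ j ∈ Finset.range n, _ = ∑ j ∈ Finset.range n,
        (1 - ((if 2*j ∈ S then (1:ℝ) else 0) + (if 2*j+1 ∈ S then (1:ℝ) else 0))) :=
        Finset.sum_congr rfl fun j _ => key j
    _ = (n:ℝ) - S.card := by
        rw [Finset.sum_sub_distrib, count_aux, Finset.inter_eq_left.2 hS]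
        simp

lemma mem_padd_left (j : ℕ) (S : Finset ℕ) : 2*j ∈ padd j S := by
  simp [padd]

lemma mem_padd_right (j : ℕ) (S : Finset ℕ) : 2*j+1 ∈ padd j S := by
  simp [padd]

lemma notMem_prem_left (j : ℕ) (S : Finset ℕ) : 2*j ∉ prem j S := by
  simp only [prem, Finset.mem_erase]
  rintro ⟨_, h, _⟩; exact h rfl

lemma notMem_prem_right (j : ℕ) (S : Finset ℕ) : 2*j+1 ∉ prem j S := by
  simp only [prem, Finset.mem_erase]
  rintro ⟨h, _⟩; exact h rfl

lemma prem_padd_self {j : ℕ} {S : Finset ℕ} (h1 : 2*j ∉ S) (h2 : 2*j+1 ∉ S) :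
    prem j (padd j S) = S := by
  ext x
  simp only [prem, padd, Finset.mem_erase, Finset.mem_insert]
  constructor
  · rintro ⟨n1, n2, (h | h | h)⟩
    · exact absurd h n2
    · exact absurd h n1
    · exact h
  · intro hx
    exact ⟨fun e => h2 (e ▸ hx), fun e => h1 (e ▸ hx), Or.inr (Or.inr hx)⟩

lemma padd_prem_self {j : ℕ} {S : Finset ℕ} (h1 : 2*j ∈ S) (h2 : 2*j+1 ∈ S) :
    padd j (prem j S) = S := by
  ext x
  simp only [prem, padd, Finset.mem_erase, Finset.mem_insert]
  constructor
  · rintro (h | h | ⟨_, _, h⟩)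
    · exact h ▸ h1
    · exact h ▸ h2
    · exact h
  · intro hx
    by_cases e1 : x = 2*j
    · exact Or.inl e1
    by_cases e2 : x = 2*j+1
    · exact Or.inr (Or.inl e2)
    · exact Or.inr (Or.inr ⟨e2, e1, hx⟩)

lemma comm_A (n : ℕ) (α : Form) (hsupp : IsSupported n α) (S : Finset ℕ) :
    ΛF n (LF n α) S = LF n (ΛF n α) S + ((n:ℝ) - S.card) * α S := by
  by_cases hS : S ⊆ Finset.range (2*n)
  swap
  · rw [ΛF_supp (LF_supp hsupp) S hS, LF_supp (ΛF_supp hsupp) S hS, hsupp S hS]; ring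
  set A : ℕ → ℕ → ℝ := fun j i =>
    if (2*j ∉ S ∧ 2*j+1 ∉ S) ∧ (2*i ∈ padd j S ∧ 2*i+1 ∈ padd j S)
    then α (prem i (padd j S)) else 0 with hA
  set B : ℕ → ℕ → ℝ := fun j i =>
    if (2*i ∈ S ∧ 2*i+1 ∈ S) ∧ (2*j ∉ prem i S ∧ 2*j+1 ∉ prem i S)
    then α (padd j (prem i S)) else 0 with hB
  have e1 : ΛF n (LF n α) S = ∑ j ∈ Finset.range n, ∑ i ∈ Finset.range n, A j i := by
    rw [ΛF]
    refine Finset.sum_congr rfl fun j _ => ?_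
    by_cases hc : 2*j ∉ S ∧ 2*j+1 ∉ S
    · rw [if_pos hc, LF]
      refine Finset.sum_congr rfl fun i _ => ?_
      simp only [hA]
      by_cases hd : 2*i ∈ padd j S ∧ 2*i+1 ∈ padd j S
      · rw [if_pos hd, if_pos ⟨hc, hd⟩]
      · rw [if_neg hd, if_neg (fun h => hd h.2)]
    · rw [if_neg hc]
      exact (Finset.sum_eq_zero fun i _ => by
        simp only [hA]; rw [if_neg (fun h => hc h.1)]).symm
  have e2 : LF n (ΛF n α) S = ∑ i ∈ Finset.range n, ∑ j ∈ Finset.range n, B j i := by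
    rw [LF]
    refine Finset.sum_congr rfl fun i _ => ?_
    by_cases hc : 2*i ∈ S ∧ 2*i+1 ∈ S
    · rw [if_pos hc, ΛF]
      refine Finset.sum_congr rfl fun j _ => ?_
      simp only [hB]
      by_cases hd : 2*j ∉ prem i S ∧ 2*j+1 ∉ prem i S
      · rw [if_pos hd, if_pos ⟨hc, hd⟩]
      · rw [if_neg hd, if_neg (fun h => hd h.2)]
    · rw [if_neg hc]
      exact (Finset.sum_eq_zero fun j _ => by
        simp only [hB]; rw [if_neg (fun h => hc h.1)]).symm
  have offdiag : ∀ j i : ℕ, j ≠ i → A j i = B j i := by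
    intro j i hne
    have m1 : 2*i ∈ padd j S ↔ 2*i ∈ S := by
      simp only [padd, Finset.mem_insert]
      constructor
      · rintro (h | h | h)
        · omega
        · omega
        · exact h
      · exact fun h => Or.inr (Or.inr h)
    have m2 : 2*i+1 ∈ padd j S ↔ 2*i+1 ∈ S := by
      simp only [padd, Finset.mem_insert]
      constructor
      · rintro (h | h | h)
        · omega
        · omega
        · exact h
      · exact fun h => Or.inr (Or.inr h)
    have m3 : 2*j ∈ prem i S ↔ 2*j ∈ S := by
      simp only [prem, Finset.mem_erase]
      constructor
      · rintro ⟨_, _, h⟩; exact h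
      · exact fun h => ⟨by omega, by omega, h⟩
    have m4 : 2*j+1 ∈ prem i S ↔ 2*j+1 ∈ S := by
      simp only [prem, Finset.mem_erase]
      constructor
      · rintro ⟨_, _, h⟩; exact h
      · exact fun h => ⟨by omega, by omega, h⟩
    have hset : prem i (padd j S) = padd j (prem i S) := by
      ext x
      simp only [prem, padd, Finset.mem_erase, Finset.mem_insert]
      constructor
      · rintro ⟨n1, n2, (h | h | h)⟩
        · exact Or.inl h
        · exact Or.inr (Or.inl h)
        · exact Or.inr (Or.inr ⟨n1, n2, h⟩)
      · rintro (h | h | ⟨n1, n2, h⟩)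
        · exact ⟨by omega, by omega, Or.inl h⟩
        · exact ⟨by omega, by omega, Or.inr (Or.inl h)⟩
        · exact ⟨n1, n2, Or.inr (Or.inr h)⟩
    have hcond : ((2*j ∉ S ∧ 2*j+1 ∉ S) ∧ (2*i ∈ padd j S ∧ 2*i+1 ∈ padd j S)) ↔
        ((2*i ∈ S ∧ 2*i+1 ∈ S) ∧ (2*j ∉ prem i S ∧ 2*j+1 ∉ prem i S)) := by
      rw [m1, m2, m3, m4]
      exact and_comm
    simp only [hA, hB]
    exact if_congr hcond (by rw [hset]) rfl
  have diag : ∀ j : ℕ, A j j - B j j =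
      ((if 2*j ∉ S ∧ 2*j+1 ∉ S then (1:ℝ) else 0)
        - (if 2*j ∈ S ∧ 2*j+1 ∈ S then (1:ℝ) else 0)) * α S := by
    intro j
    have hAjj : A j j = if 2*j ∉ S ∧ 2*j+1 ∉ S then α S else 0 := by
      simp only [hA]
      by_cases hc : 2*j ∉ S ∧ 2*j+1 ∉ S
      · rw [if_pos ⟨hc, mem_padd_left j S, mem_padd_right j S⟩, if_pos hc,
          prem_padd_self hc.1 hc.2]
      · rw [if_neg (fun h => hc h.1), if_neg hc]
    have hBjj : B j j = if 2*j ∈ S ∧ 2*j+1 ∈ S then α S else 0 := by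
      simp only [hB]
      by_cases hc : 2*j ∈ S ∧ 2*j+1 ∈ S
      · rw [if_pos ⟨hc, notMem_prem_left j S, notMem_prem_right j S⟩, if_pos hc,
          padd_prem_self hc.1 hc.2]
      · rw [if_neg (fun h => hc h.1), if_neg hc]
    rw [hAjj, hBjj]
    by_cases h1 : 2*j ∉ S ∧ 2*j+1 ∉ S <;> by_cases h2 : 2*j ∈ S ∧ 2*j+1 ∈ S <;>
      simp [h1, h2]
  have main : ΛF n (LF n α) S - LF n (ΛF n α) S = ((n:ℝ) - S.card) * α S := by
    have e2' : LF n (ΛF n α) S = ∑ j ∈ Finset.range n, ∑ i ∈ Finset.range n, B j i := by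
      rw [e2]; exact Finset.sum_comm
    rw [e1, e2', ← Finset.sum_sub_distrib]
    have : ∀ j ∈ Finset.range n, (∑ i ∈ Finset.range n, A j i) - (∑ i ∈ Finset.range n, B j i)
        = A j j - B j j := by
      intro j hj
      rw [← Finset.sum_sub_distrib]
      refine Finset.sum_eq_single_of_mem j hj fun i _ hne => ?_
      rw [offdiag j i (fun e => hne e.symm)]
      ring
    rw [Finset.sum_congr rfl this]
    calc ∑ j ∈ Finset.range n, (A j j - B j j)
        = ∑ j ∈ Finset.range n,
          ((if 2*j ∉ S ∧ 2*j+1 ∉ S then (1:ℝ) else 0)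
            - (if 2*j ∈ S ∧ 2*j+1 ∈ S then (1:ℝ) else 0)) * α S :=
          Finset.sum_congr rfl fun j _ => diag j
      _ = ((n:ℝ) - S.card) * α S := by
          rw [← Finset.sum_mul, count_lemma hS]
  linarith [main]

lemma LF_iter_zero (n m : ℕ) : (LF n)^[m] (fun _ => (0:ℝ)) = fun _ => (0:ℝ) := by
  induction m with
  | zero => rfl
  | succ m ih => rw [Function.iterate_succ_apply', ih, LF_zero]

lemma comm_B (n k : ℕ) (α : Form) (hsupp : IsSupported n α) (hdeg : HasDeg k α) (m : ℕ) :
    ΛF n ((LF n)^[m+1] α) = fun S =>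
      (LF n)^[m+1] (ΛF n α) S + ((m:ℝ)+1) * ((n:ℝ)-(k:ℝ)-(m:ℝ)) * (LF n)^[m] α S := by
  induction m with
  | zero =>
      funext S
      simp only [zero_add, Function.iterate_one, Function.iterate_zero, id, Nat.cast_zero]
      rw [comm_A n α hsupp S]
      have hr : ((n:ℝ) - S.card) * α S = ((n:ℝ) - k) * α S := by
        by_cases h : S.card = k
        · rw [h]
        · rw [hdeg S h]; ring
      rw [hr]; ring
  | succ m ih =>
      have hstep : ∀ β : Form, (LF n)^[m+1+1] β = LF n ((LF n)^[m+1] β) :=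
        fun β => Function.iterate_succ_apply' (LF n) (m+1) β
      funext S
      rw [hstep α, comm_A n ((LF n)^[m+1] α) (LF_iter_supp hsupp (m+1)) S, ih,
        LF_lin n ((LF n)^[m+1] (ΛF n α)) ((LF n)^[m] α) (((m:ℝ)+1) * ((n:ℝ)-(k:ℝ)-(m:ℝ)))]
      have r1 : LF n ((LF n)^[m+1] (ΛF n α)) S = (LF n)^[m+1+1] (ΛF n α) S := by
        rw [hstep (ΛF n α)]
      have r2 : LF n ((LF n)^[m] α) S = (LF n)^[m+1] α S := by
        rw [Function.iterate_succ_apply' (LF n) m α]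
      have r3 : ((n:ℝ) - S.card) * (LF n)^[m+1] α S
          = ((n:ℝ) - (k:ℝ) - 2*((m:ℝ)+1)) * (LF n)^[m+1] α S := by
        by_cases h : S.card = k + 2*(m+1)
        · rw [h]; push_cast; ring
        · rw [LF_iter_deg hdeg (m+1) S h]; ring
      simp only []
      rw [r1, r2, r3]
      push_cast; ring

def ipn (n : ℕ) (f g : Form) : ℝ := ∑ S ∈ (Finset.range (2*n)).powerset, f S * g S

lemma adj (n : ℕ) (f g : Form) : ipn n (LF n f) g = ipn n f (ΛF n g) := by
  rw [ipn, ipn]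
  have lhs : ∀ S : Finset ℕ, LF n f S * g S
      = ∑ i ∈ Finset.range n, (if 2*i ∈ S ∧ 2*i+1 ∈ S then f (prem i S) * g S else 0) := by
    intro S
    rw [LF, Finset.sum_mul]
    exact Finset.sum_congr rfl fun i _ => by split <;> simp
  have rhs : ∀ S : Finset ℕ, f S * ΛF n g S
      = ∑ i ∈ Finset.range n, (if 2*i ∉ S ∧ 2*i+1 ∉ S then f S * g (padd i S) else 0) := by
    intro S
    rw [ΛF, Finset.mul_sum]
    exact Finset.sum_congr rfl fun i _ => by split <;> simp
  rw [Finset.sum_congr rfl fun S _ => lhs S, Finset.sum_congr rfl fun S _ => rhs S]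
  conv_lhs => rw [Finset.sum_comm]
  conv_rhs => rw [Finset.sum_comm]
  refine Finset.sum_congr rfl fun i hi => ?_
  have hin : i < n := Finset.mem_range.1 hi
  rw [← Finset.sum_filter, ← Finset.sum_filter]
  refine Finset.sum_nbij' (prem i) (padd i) ?_ ?_ ?_ ?_ ?_
  · intro S hS
    simp only [Finset.mem_filter, Finset.mem_powerset] at hS ⊢
    obtain ⟨hsub, h1, h2⟩ := hS
    refine ⟨fun x hx => hsub ?_, notMem_prem_left i S, notMem_prem_right i S⟩
    · exact Finset.mem_of_mem_erase (Finset.mem_of_mem_erase hx)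
  · intro T hT
    simp only [Finset.mem_filter, Finset.mem_powerset] at hT ⊢
    obtain ⟨hsub, h1, h2⟩ := hT
    refine ⟨?_, mem_padd_left i T, mem_padd_right i T⟩
    intro x hx
    simp only [padd, Finset.mem_insert] at hx
    rcases hx with h | h | h
    · subst h; exact Finset.mem_range.2 (by omega)
    · subst h; exact Finset.mem_range.2 (by omega)
    · exact hsub h
  · intro S hS
    simp only [Finset.mem_filter] at hS
    exact padd_prem_self hS.2.1 hS.2.2
  · intro T hT
    simp only [Finset.mem_filter] at hT
    exact prem_padd_self hT.2.1 hT.2.2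
  · intro S hS
    simp only [Finset.mem_filter] at hS
    rw [padd_prem_self hS.2.1 hS.2.2]

lemma ipn_self_zero {n : ℕ} {f : Form} (hsupp : IsSupported n f) (h : ipn n f f = 0) :
    f = fun _ => (0:ℝ) := by
  funext S
  by_cases hS : S ⊆ Finset.range (2*n)
  · have := (Finset.sum_eq_zero_iff_of_nonneg
      (fun T _ => mul_self_nonneg (f T))).1 h S (Finset.mem_powerset.2 hS)
    exact mul_self_eq_zero.1 this
  · exact hsupp S hS

lemma descent (n k : ℕ) (α : Form) (hsupp : IsSupported n α) (hdeg : HasDeg k α)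
    (hprim : ΛF n α = fun _ => (0:ℝ)) :
    ∀ m, m + k ≤ n → (LF n)^[m] α = (fun _ => (0:ℝ)) → α = fun _ => (0:ℝ) := by
  intro m
  induction m with
  | zero => intro _ h; simpa using h
  | succ m ih =>
      intro hm hz
      have hB := comm_B n k α hsupp hdeg m
      rw [hz, ΛF_zero, hprim, LF_iter_zero] at hB
      have hzm : (LF n)^[m] α = fun _ => (0:ℝ) := by
        funext S
        have hfs := congrFun hB S
        simp only [] at hfs
        have hc : ((m:ℝ)+1) * ((n:ℝ)-(k:ℝ)-(m:ℝ)) > 0 := by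
          have h1 : (m:ℝ) + (k:ℝ) + 1 ≤ (n:ℝ) := by
            have : ((m + k + 1 : ℕ) : ℝ) ≤ ((n:ℕ) : ℝ) := Nat.cast_le.2 (by omega)
            push_cast at this; linarith
          have h2 : (0:ℝ) ≤ k := Nat.cast_nonneg k
          nlinarith
        have : ((m:ℝ)+1) * ((n:ℝ)-(k:ℝ)-(m:ℝ)) * (LF n)^[m] α S = 0 := by linarith
        exact (mul_eq_zero.1 this).resolve_left (by positivity)
      exact ih (by omega) hzm

lemma dir1 (n k : ℕ) (hk : k ≤ n) (α : Form) (hsupp : IsSupported n α) (hdeg : HasDeg k α)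
    (hprim : ΛF n α = fun _ => (0:ℝ)) : (LF n)^[n-k+1] α = fun _ => (0:ℝ) := by
  have hB := comm_B n k α hsupp hdeg (n-k)
  rw [hprim, LF_iter_zero] at hB
  have hc0 : (n:ℝ)-(k:ℝ)-((n-k:ℕ):ℝ) = 0 := by rw [Nat.cast_sub hk]; ring
  have hZ : ΛF n ((LF n)^[n-k+1] α) = fun _ => (0:ℝ) := by
    rw [hB]; funext S; rw [hc0]; simp
  have hadj : ipn n ((LF n)^[n-k+1] α) ((LF n)^[n-k+1] α) = 0 := by
    have h1 : (LF n)^[n-k+1] α = LF n ((LF n)^[n-k] α) :=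
      Function.iterate_succ_apply' (LF n) (n-k) α
    rw [h1, adj n ((LF n)^[n-k] α) (LF n ((LF n)^[n-k] α)), ← h1, hZ]
    rw [ipn, Finset.sum_eq_zero]
    intro S _
    simp
  exact ipn_self_zero (LF_iter_supp hsupp (n-k+1)) hadj

lemma dir2 (n : ℕ) : ∀ k, k ≤ n → ∀ α : Form, IsSupported n α → HasDeg k α →
    (LF n)^[n-k+1] α = (fun _ => (0:ℝ)) → ΛF n α = fun _ => (0:ℝ) := by
  intro k
  induction k using Nat.strong_induction_on with
  | _ k ih =>
    intro hk α hsupp hdeg hL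
    by_cases hk2 : k ≤ 1
    · funext S
      show ΛF n α S = 0
      rw [ΛF]
      refine Finset.sum_eq_zero fun i _ => ?_
      split_ifs with hc
      · exact hdeg _ (by rw [card_padd hc.1 hc.2]; omega)
      · rfl
    · have hB := comm_B n k α hsupp hdeg (n-k)
      rw [hL, ΛF_zero] at hB
      have hc0 : (n:ℝ)-(k:ℝ)-((n-k:ℕ):ℝ) = 0 := by rw [Nat.cast_sub hk]; ring
      have hLβ : (LF n)^[n-k+1] (ΛF n α) = fun _ => (0:ℝ) := by
        funext S
        have hfs := congrFun hB S
        rw [hc0] at hfs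
        simp only [mul_zero, zero_mul, add_zero] at hfs
        exact hfs.symm
      have hLβ2 : (LF n)^[n-(k-2)+1] (ΛF n α) = fun _ => (0:ℝ) := by
        have harith : n-(k-2)+1 = 2 + (n-k+1) := by omega
        rw [harith, Function.iterate_add_apply, hLβ, LF_iter_zero]
      have hdegβ : HasDeg (k-2) (ΛF n α) := fun S hS => ΛF_deg' hdeg S (by omega)
      have hprimβ : ΛF n (ΛF n α) = fun _ => (0:ℝ) :=
        ih (k-2) (by omega) (by omega) (ΛF n α) (ΛF_supp hsupp) hdegβ hLβ2
      exact descent n (k-2) (ΛF n α) (ΛF_supp hsupp) hdegβ hprimβ (n-k+1) (by omega) hLβ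

/-- A `k`-form `α` on the `2n`-dimensional symplectic vector
space `ℝ^{2n}` (with `k ≤ n`) is primitive, i.e. `Λα = 0`, if and only if
`L^{n-k+1} α = 0`. -/
theorem primitive_iff_lefschetz_power (n k : ℕ) (hk : k ≤ n) (α : Form)
    (hsupp : IsSupported n α) (hdeg : ∀ S : Finset ℕ, S.card ≠ k → α S = 0) :
    Λop n α = 0 ↔ (Lop n)^[n - k + 1] α = 0 := by
  rw [Λop_eq, Lop_eq]
  have zf : (0 : Form) = fun _ => (0:ℝ) := rfl
  rw [zf]
  constructor
  · exact dir1 n k hk α hsupp hdeg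
  · exact dir2 n k hk α hsupp hdeg

end
end

section
/- On a closed symplectic manifold with compatible metric, if a k-form α satisfies 𝒟α = 0 where 𝒟 = d*dd*d + d^{Λ*}d^Λ d^{Λ*}d^Λ + d^{Λ*}dd*d^Λ + d*d^Λ d^{Λ*}d + 2 dd^Λ d^{Λ*}d*, then dα = 0, d^Λα = 0 and d^{Λ*}d*α = 0; i.e. ker 𝒟 equals the space of d+d^Λ harmonic k-forms. (The key computational step: ⟨α, 𝒟α⟩ = ‖d*dα‖² + ‖d^{Λ*}d^Λα‖² + ‖d*d^Λα‖² + ‖d^{Λ*}dα‖² + 2‖d^{Λ*}d*α‖², interpreted with the terms rearranged by adjointness.) -/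
/-!
Abstract model: `A` is the (pre-Hilbert) space `Ω^k(M)` of `k`-forms on a
closed symplectic manifold with compatible triple `(ω, g, J)`, with the
`L²` inner product `(α, β) = ∫_M α ∧ *β`.  The operators `d`, `d^Λ` and their
formal adjoints `d*`, `d^{Λ*}` are encoded by the adjointness identities.
-/

open scoped RealInnerProductSpace

/-- If a `k`-form `α` satisfies `𝒟α = 0`, where
`𝒟 = d*dd*d + d^{Λ*}d^Λ d^{Λ*}d^Λ + d^{Λ*}dd*d^Λ + d*d^Λ d^{Λ*}d + 2 dd^Λ d^{Λ*}d*`,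
then `dα = 0`, `d^Λα = 0` and `d^{Λ*}d*α = 0`; i.e. `ker 𝒟` equals the space
of `d+d^Λ` harmonic `k`-forms.  Key computational step:
`⟨α, 𝒟α⟩ = ‖d*dα‖² + ‖d^{Λ*}d^Λα‖² + ‖d*d^Λα‖² + ‖d^{Λ*}dα‖² + 2‖d^{Λ*}d*α‖²`. -/
theorem ker_D_eq_harmonic {A : Type*} [NormedAddCommGroup A] [InnerProductSpace ℝ A]
    (d dΛ ds dΛs : A →ₗ[ℝ] A)
    (hadj_d : ∀ x y : A, ⟪d x, y⟫ = ⟪x, ds y⟫)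
    (hadj_dΛ : ∀ x y : A, ⟪dΛ x, y⟫ = ⟪x, dΛs y⟫)
    (D : A →ₗ[ℝ] A)
    (hD : D = ds ∘ₗ d ∘ₗ ds ∘ₗ d + dΛs ∘ₗ dΛ ∘ₗ dΛs ∘ₗ dΛ +
        dΛs ∘ₗ d ∘ₗ ds ∘ₗ dΛ + ds ∘ₗ dΛ ∘ₗ dΛs ∘ₗ d +
        (2 : ℝ) • (d ∘ₗ dΛ ∘ₗ dΛs ∘ₗ ds)) :
    (∀ α : A, D α = 0 ↔ (d α = 0 ∧ dΛ α = 0 ∧ dΛs (ds α) = 0)) ∧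
    (∀ α : A, ⟪α, D α⟫ =
      ‖ds (d α)‖ ^ 2 + ‖dΛs (dΛ α)‖ ^ 2 + ‖ds (dΛ α)‖ ^ 2 +
        ‖dΛs (d α)‖ ^ 2 + 2 * ‖dΛs (ds α)‖ ^ 2) := by

  have hadj_d' : ∀ x y : A, ⟪x, ds y⟫ = ⟪d x, y⟫ := fun x y => (hadj_d x y).symm
  have hadj_dΛ' : ∀ x y : A, ⟪x, dΛs y⟫ = ⟪dΛ x, y⟫ := fun x y => (hadj_dΛ x y).symm
  have key : ∀ α : A, ⟪α, D α⟫ =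
      ‖ds (d α)‖ ^ 2 + ‖dΛs (dΛ α)‖ ^ 2 + ‖ds (dΛ α)‖ ^ 2 +
        ‖dΛs (d α)‖ ^ 2 + 2 * ‖dΛs (ds α)‖ ^ 2 := by
    intro α
    have h1 : ⟪α, ds (d (ds (d α)))⟫ = ‖ds (d α)‖ ^ 2 := by
      rw [hadj_d', real_inner_comm, hadj_d, real_inner_self_eq_norm_sq]
    have h2 : ⟪α, dΛs (dΛ (dΛs (dΛ α)))⟫ = ‖dΛs (dΛ α)‖ ^ 2 := by
      rw [hadj_dΛ', real_inner_comm, hadj_dΛ, real_inner_self_eq_norm_sq]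
    have h3 : ⟪α, dΛs (d (ds (dΛ α)))⟫ = ‖ds (dΛ α)‖ ^ 2 := by
      rw [hadj_dΛ', real_inner_comm, hadj_d, real_inner_self_eq_norm_sq]
    have h4 : ⟪α, ds (dΛ (dΛs (d α)))⟫ = ‖dΛs (d α)‖ ^ 2 := by
      rw [hadj_d', real_inner_comm, hadj_dΛ, real_inner_self_eq_norm_sq]
    have h5 : ⟪α, d (dΛ (dΛs (ds α)))⟫ = ‖dΛs (ds α)‖ ^ 2 := by
      rw [real_inner_comm, hadj_d, hadj_dΛ, real_inner_self_eq_norm_sq]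
    simp only [hD, LinearMap.add_apply, LinearMap.comp_apply, LinearMap.smul_apply,
      inner_add_right, inner_smul_right, h1, h2, h3, h4, h5]
    try ring
  refine ⟨fun α => ?_, key⟩
  constructor
  · intro hα
    have h0 : ⟪α, D α⟫ = 0 := by rw [hα, inner_zero_right]
    rw [key α] at h0
    have n1 := sq_nonneg ‖ds (d α)‖
    have n2 := sq_nonneg ‖dΛs (dΛ α)‖
    have n3 := sq_nonneg ‖ds (dΛ α)‖
    have n4 := sq_nonneg ‖dΛs (d α)‖
    have n5 := sq_nonneg ‖dΛs (ds α)‖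
    have e1 : ds (d α) = 0 := by
      have : ‖ds (d α)‖ ^ 2 = 0 := by nlinarith
      simpa using pow_eq_zero_iff (n := 2) (by norm_num) |>.mp this
    have e2 : dΛs (dΛ α) = 0 := by
      have : ‖dΛs (dΛ α)‖ ^ 2 = 0 := by nlinarith
      simpa using pow_eq_zero_iff (n := 2) (by norm_num) |>.mp this
    have e5 : dΛs (ds α) = 0 := by
      have : ‖dΛs (ds α)‖ ^ 2 = 0 := by nlinarith
      simpa using pow_eq_zero_iff (n := 2) (by norm_num) |>.mp this
    have hd : d α = 0 := by
      have : ⟪d α, d α⟫ = 0 := by rw [hadj_d, e1, inner_zero_right]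
      exact (inner_self_eq_zero (𝕜 := ℝ)).mp this
    have hdΛ : dΛ α = 0 := by
      have : ⟪dΛ α, dΛ α⟫ = 0 := by rw [hadj_dΛ, e2, inner_zero_right]
      exact (inner_self_eq_zero (𝕜 := ℝ)).mp this
    exact ⟨hd, hdΛ, e5⟩
  · rintro ⟨h1, h2, h3⟩
    simp [hD, LinearMap.add_apply, LinearMap.comp_apply, LinearMap.smul_apply, h1, h2, h3]
end
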